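/- arXiv:1506.04604 — 2 statements merged into one kernel-verified Lean document; each statement's English description precedes it below -/
import Mathlib

section
/- The bracket defined on the 8-dimensional space g of constrained triples (a, S⁺, S⁻) is well-defined (g is closed under it), is antisymmetric, and satisfies the Jacobi identity; hence g is an 8-dimensional complex Lie algebra (the derivation algebra Der(𝕊) of the sextonions). -/
open Matrix

abbrev V3 := Fin 3 → ℂ

def cross (A B : V3) : V3 := crossProduct A B

abbrev M3 := Matrix (Fin 3) (Fin 3) ℂ

/-- Elements of the matrix realization G of g₂: triples X = (a, A⁺, A⁻). -/
abbrev GC := M3 × V3 × V3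

/-- The product A⁺∘B⁻ := tr(A⁺B⁻)·I − 3·A⁺B⁻, with A⁺B⁻ the outer product. -/
noncomputable def circ (A B : V3) : M3 := (A ⬝ᵥ B) • (1 : M3) - (3 : ℂ) • vecMulVec A B

/-- The g₂ bracket on G:
[X,Y] = ([a,b] + A⁺∘B⁻ − B⁺∘A⁻, aB⁺ − bA⁺ + 2 A⁻×B⁻, A⁻b − B⁻a + 2 A⁺×B⁺). -/
noncomputable def gbr (X Y : GC) : GC :=
  ( X.1 * Y.1 - Y.1 * X.1 + circ X.2.1 Y.2.2 - circ Y.2.1 X.2.2,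
    X.1 *ᵥ Y.2.1 - Y.1 *ᵥ X.2.1 + (2 : ℂ) • cross X.2.2 Y.2.2,
    X.2.2 ᵥ* Y.1 - Y.2.2 ᵥ* X.1 + (2 : ℂ) • cross X.2.1 Y.2.1 )

/-- m′ : the matrix m with its (2,3)-entry (0-based: (1,2)) replaced by 0. -/
def prime (m : M3) : M3 := fun i j => if i = 1 ∧ j = 2 then 0 else m i j

/-- The constrained product S⁺∘′R⁻ := tr(S⁺R⁻)·I − 3·(S⁺R⁻)′. -/
noncomputable def circ' (A B : V3) : M3 :=
  (A ⬝ᵥ B) • (1 : M3) - (3 : ℂ) • prime (vecMulVec A B)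

/-- The bracket of the derivation algebra g = Der(𝕊) of the sextonions:
[(a,S⁺,S⁻),(b,R⁺,R⁻)] = ( ([a,b])′ + S⁺∘′R⁻ − R⁺∘′S⁻ ,
  aR⁺ − bS⁺ + 2 S⁻×R⁻ , S⁻b − R⁻a + 2 S⁺×R⁺ ). -/
noncomputable def gbr' (X Y : GC) : GC :=
  ( prime (X.1 * Y.1 - Y.1 * X.1) + circ' X.2.1 Y.2.2 - circ' Y.2.1 X.2.2,
    X.1 *ᵥ Y.2.1 - Y.1 *ᵥ X.2.1 + (2 : ℂ) • cross X.2.2 Y.2.2,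
    X.2.2 ᵥ* Y.1 - Y.2.2 ᵥ* X.1 + (2 : ℂ) • cross X.2.1 Y.2.1 )

/-- Membership in g = Der(𝕊):
a₁₂ = a₂₃ = a₃₁ = a₃₂ = 0 (1-based), tr a = 0, S⁺₃ = 0, S⁻₂ = 0. -/
def ing (X : GC) : Prop :=
  X.1 0 1 = 0 ∧ X.1 1 2 = 0 ∧ X.1 2 0 = 0 ∧ X.1 2 1 = 0 ∧ X.1.trace = 0 ∧
  X.2.1 2 = 0 ∧ X.2.2 1 = 0

/-- g = Der(𝕊) as a ℂ-submodule. -/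
noncomputable def gsub : Submodule ℂ GC where
  carrier := {X | ing X}
  add_mem' := by
    rintro X Y ⟨h1, h2, h3, h4, h5, h6, h7⟩ ⟨g1, g2, g3, g4, g5, g6, g7⟩
    refine ⟨?_, ?_, ?_, ?_, ?_, ?_, ?_⟩ <;>
      simp [Prod.fst_add, Prod.snd_add, Matrix.add_apply, Matrix.trace_add, Pi.add_apply, *]
  zero_mem' := by
    refine ⟨rfl, rfl, rfl, rfl, ?_, rfl, rfl⟩
    simp
  smul_mem' := by
    rintro c X ⟨h1, h2, h3, h4, h5, h6, h7⟩
    refine ⟨?_, ?_, ?_, ?_, ?_, ?_, ?_⟩ <;>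
      simp [Prod.smul_fst, Prod.smul_snd, Matrix.smul_apply, Matrix.trace_smul, Pi.smul_apply, *]

/-!
In the coordinates `a = [[x₀, 0, x₃], [x₁, x₂, 0], [0, 0, -(x₀ + x₂)]]`, `S⁺ = (x₄, x₅, 0)`,
`S⁻ = (x₆, 0, x₇)` the space `g` is a copy of `ℂ⁸`, and the bracket of two elements of `g` is
again an element of `g` whose coordinates are given by explicit quadratic structure constants.
Closure is then immediate and the Jacobi identity becomes a polynomial identity in the
coordinates, while antisymmetry holds on all triples because `′` is linear and `×` is alternating.
-/

namespace DerS

lemma prime_neg (m : M3) : prime (-m) = -prime m := by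
  ext i j
  by_cases h : i = 1 ∧ j = 2 <;> simp [prime, h]

lemma gbr'_antisymm (X Y : GC) : gbr' X Y = -gbr' Y X := by
  refine Prod.ext ?_ (Prod.ext ?_ ?_) <;> dsimp only [gbr', cross, Prod.fst_neg, Prod.snd_neg]
  · rw [← neg_sub (Y.1 * X.1), prime_neg]; abel
  · rw [← cross_anticomm X.2.2, smul_neg]; abel
  · rw [← cross_anticomm X.2.1, smul_neg]; abel

def ofCoords : (Fin 8 → ℂ) →ₗ[ℂ] GC where
  toFun x := (!![x 0, 0, x 3; x 1, x 2, 0; 0, 0, -(x 0 + x 2)], ![x 4, x 5, 0], ![x 6, 0, x 7])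
  map_add' x y := by
    refine Prod.ext ?_ (Prod.ext ?_ ?_)
    · ext i j; fin_cases i <;> fin_cases j <;> simp; ring
    · ext i; fin_cases i <;> simp
    · ext i; fin_cases i <;> simp
  map_smul' c x := by
    refine Prod.ext ?_ (Prod.ext ?_ ?_)
    · ext i j; fin_cases i <;> fin_cases j <;> simp; ring
    · ext i; fin_cases i <;> simp
    · ext i; fin_cases i <;> simp

def coords (X : GC) : Fin 8 → ℂ :=
  ![X.1 0 0, X.1 1 0, X.1 1 1, X.1 0 2, X.2.1 0, X.2.1 1, X.2.2 0, X.2.2 2]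

lemma coords_ofCoords (x : Fin 8 → ℂ) : coords (ofCoords x) = x := by
  ext i; fin_cases i <;> rfl

lemma ing_ofCoords (x : Fin 8 → ℂ) : ing (ofCoords x) := by
  refine ⟨rfl, rfl, rfl, rfl, ?_, rfl, rfl⟩
  simp [ofCoords, trace_fin_three]

lemma ofCoords_coords {X : GC} (hX : ing X) : ofCoords (coords X) = X := by
  obtain ⟨h01, h12, h20, h21, htr, hplus, hminus⟩ := hX
  rw [trace_fin_three] at htr
  refine Prod.ext ?_ (Prod.ext ?_ ?_)
  · ext i j
    fin_cases i <;> fin_cases j <;> simp [ofCoords, coords, *]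
    linear_combination -htr
  · ext i; fin_cases i <;> simp [ofCoords, coords, hplus]
  · ext i; fin_cases i <;> simp [ofCoords, coords, hminus]

lemma gsub_eq_range : gsub = LinearMap.range ofCoords := by
  ext X
  exact ⟨fun hX => ⟨coords X, ofCoords_coords hX⟩, by rintro ⟨x, rfl⟩; exact ing_ofCoords x⟩

lemma finrank_gsub : Module.finrank ℂ gsub = 8 := by
  rw [gsub_eq_range, LinearMap.finrank_range_of_inj
    (Function.LeftInverse.injective coords_ofCoords), Module.finrank_fin_fun]

def coordBracket (x y : Fin 8 → ℂ) : Fin 8 → ℂ :=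
  ![ -2*x 4*y 6 + 2*x 6*y 4,
     -(x 0*y 1) + x 1*y 0 - x 1*y 2 + x 2*y 1 - 3*x 5*y 6 + 3*x 6*y 5,
     x 4*y 6 - x 6*y 4,
     2*x 0*y 3 + x 2*y 3 - 2*x 3*y 0 - x 3*y 2 - 3*x 4*y 7 + 3*x 7*y 4,
     x 0*y 4 - x 4*y 0,
     x 1*y 4 + x 2*y 5 - x 4*y 1 - x 5*y 2 - 2*x 6*y 7 + 2*x 7*y 6,
     -(x 0*y 6) + x 6*y 0,
     x 0*y 7 + x 2*y 7 - x 3*y 6 + 2*x 4*y 5 - 2*x 5*y 4 + x 6*y 3 - x 7*y 0 - x 7*y 2 ]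

lemma gbr'_ofCoords (x y : Fin 8 → ℂ) :
    gbr' (ofCoords x) (ofCoords y) = ofCoords (coordBracket x y) := by
  refine Prod.ext ?_ (Prod.ext ?_ ?_)
  · ext i j
    fin_cases i <;> fin_cases j <;>
      simp [gbr', circ', prime, one_apply, ofCoords, coordBracket] <;> ring
  · ext i
    fin_cases i <;>
      simp [gbr', cross, cross_apply, ofCoords, coordBracket, vecHead, vecTail] <;> ring
  · ext i
    fin_cases i <;>
      simp [gbr', cross, cross_apply, ofCoords, coordBracket, vecHead, vecTail] <;> ring

lemma coordBracket_jacobi (x y z : Fin 8 → ℂ) :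
    coordBracket (coordBracket x y) z + coordBracket (coordBracket y z) x +
      coordBracket (coordBracket z x) y = 0 := by
  ext i; fin_cases i <;> simp [coordBracket] <;> ring

end DerS

open DerS in
/-- the bracket on the 8-dimensional space g of constrained triples
(a, S⁺, S⁻) is well-defined (g is closed under it), antisymmetric and satisfies the
Jacobi identity; hence g is an 8-dimensional complex Lie algebra (Der(𝕊)). -/
theorem derS_is_lie_algebra :
    (∀ X Y : GC, ing X → ing Y → ing (gbr' X Y)) ∧
    (∀ X Y : GC, ing X → ing Y → gbr' X Y = - gbr' Y X) ∧
    (∀ X Y Z : GC, ing X → ing Y → ing Z →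
      gbr' (gbr' X Y) Z + gbr' (gbr' Y Z) X + gbr' (gbr' Z X) Y = 0) ∧
    Module.finrank ℂ gsub = 8 := by
  refine ⟨?_, fun X Y _ _ => gbr'_antisymm X Y, ?_, finrank_gsub⟩
  · intro X Y hX hY
    rw [← ofCoords_coords hX, ← ofCoords_coords hY, gbr'_ofCoords]
    exact ing_ofCoords _
  · intro X Y Z hX hY hZ
    rw [← ofCoords_coords hX, ← ofCoords_coords hY, ← ofCoords_coords hZ]
    simp only [gbr'_ofCoords, ← map_add, coordBracket_jacobi, map_zero]
end

section
/- Let P ⊆ G be the 9-dimensional subspace of triples (a, A⁺, A⁻) with a₁₂ = a₃₁ = a₃₂ = 0, A⁺₃ = 0 and A⁻₂ = 0. Then P is closed under the bracket of G (so P is a Lie subalgebra), and the linear map π : P → g which replaces the (2,3)-entry of a by 0 (and leaves A⁺, A⁻ unchanged) is a surjective Lie algebra homomorphism from P onto g whose kernel is the one-dimensional span of (E₂₃, 0, 0). -/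
/-! The matrix parts allowed in `P` are the traceless matrices preserving the flag
`⟨e₂⟩ ⊂ ⟨e₁, e₂⟩`, which form an associative algebra; the bracket keeps this shape and the
vanishing of `A⁺₃, A⁻₂`, so `P` is closed. For `b` preserving the flag, `[E₂₃, b] = (b₃₃ - b₂₂) E₂₃`
and `E₂₃ A⁺ = 0 = A⁻ E₂₃`, so the `E₂₃`-components of the arguments only ever contribute to the
`(2,3)`-entry of the bracket, which `π` discards: `π` is a homomorphism with kernel `ℂ E₂₃`. -/

open Matrix

/-- Membership in P ⊆ G: a ∈ sl₃ with a₁₂ = a₃₁ = a₃₂ = 0 (1-based), A⁺₃ = 0, A⁻₂ = 0. -/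
def inP (X : GC) : Prop :=
  X.1.trace = 0 ∧ X.1 0 1 = 0 ∧ X.1 2 0 = 0 ∧ X.1 2 1 = 0 ∧ X.2.1 2 = 0 ∧ X.2.2 1 = 0

/-- π : P → g, replacing the (2,3)-entry of a by 0. -/
def piP (X : GC) : GC := (prime X.1, X.2.1, X.2.2)

/-- `a` preserves the flag `⟨e₂⟩ ⊂ ⟨e₁, e₂⟩`, i.e. is upper triangular in the basis order
`e₂, e₁, e₃` (indices 1-based; in the code they are 0-based). -/
def PreservesFlag (a : M3) : Prop := a 0 1 = 0 ∧ a 2 0 = 0 ∧ a 2 1 = 0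

namespace PreservesFlag

variable {a b : M3}

theorem add (ha : PreservesFlag a) (hb : PreservesFlag b) : PreservesFlag (a + b) := by
  obtain ⟨ha₁, ha₂, ha₃⟩ := ha
  obtain ⟨hb₁, hb₂, hb₃⟩ := hb
  simp [PreservesFlag, *]

theorem sub (ha : PreservesFlag a) (hb : PreservesFlag b) : PreservesFlag (a - b) := by
  obtain ⟨ha₁, ha₂, ha₃⟩ := ha
  obtain ⟨hb₁, hb₂, hb₃⟩ := hb
  simp [PreservesFlag, *]

theorem mul (ha : PreservesFlag a) (hb : PreservesFlag b) : PreservesFlag (a * b) := by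
  obtain ⟨ha₁, ha₂, ha₃⟩ := ha
  obtain ⟨hb₁, hb₂, hb₃⟩ := hb
  simp [PreservesFlag, mul_apply, Fin.sum_univ_three, *]

theorem prime (ha : PreservesFlag a) : PreservesFlag (prime a) := by
  obtain ⟨ha₁, ha₂, ha₃⟩ := ha
  simp [PreservesFlag, _root_.prime, *]

end PreservesFlag

theorem preservesFlag_circ {A B : V3} (hA : A 2 = 0) (hB : B 1 = 0) :
    PreservesFlag (circ A B) := by
  simp [PreservesFlag, circ, vecMulVec_apply, one_apply, hA, hB]

theorem trace_circ (A B : V3) : (circ A B).trace = 0 := by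
  simp only [circ, trace_sub, trace_smul, trace_one, Fintype.card_fin, Nat.cast_ofNat, smul_eq_mul,
    trace_vecMulVec]
  ring

theorem mulVec_apply_two_eq_zero {a : M3} {B : V3} (ha : PreservesFlag a) (hB : B 2 = 0) :
    (a *ᵥ B) 2 = 0 := by
  obtain ⟨-, ha₂, ha₃⟩ := ha
  simp [mulVec, dotProduct, Fin.sum_univ_three, ha₂, ha₃, hB]

theorem vecMul_apply_one_eq_zero {a : M3} {A : V3} (ha : PreservesFlag a) (hA : A 1 = 0) :
    (A ᵥ* a) 1 = 0 := by
  obtain ⟨ha₁, -, ha₃⟩ := ha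
  simp [vecMul, dotProduct, Fin.sum_univ_three, ha₁, ha₃, hA]

theorem cross_apply_two_eq_zero {A B : V3} (hA : A 1 = 0) (hB : B 1 = 0) : cross A B 2 = 0 := by
  simp [cross, cross_apply, hA, hB]

theorem cross_apply_one_eq_zero {A B : V3} (hA : A 2 = 0) (hB : B 2 = 0) : cross A B 1 = 0 := by
  simp [cross, cross_apply, hA, hB]

theorem prime_add_single (m : M3) : prime m + single 1 2 (m 1 2) = m := by
  ext i j
  fin_cases i <;> fin_cases j <;> simp [prime]

theorem prime_add (m n : M3) : prime (m + n) = prime m + prime n := by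
  ext i j
  simp only [prime, Matrix.add_apply]
  split_ifs <;> simp

theorem prime_sub (m n : M3) : prime (m - n) = prime m - prime n := by
  ext i j
  simp only [prime, Matrix.sub_apply]
  split_ifs <;> simp

theorem prime_single (c : ℂ) : prime (single 1 2 c) = 0 := by
  ext i j
  simp only [prime, Matrix.zero_apply]
  split_ifs with h
  · rfl
  · exact single_apply_of_ne _ _ _ _ _ (by tauto)

theorem prime_circ (A B : V3) : prime (circ A B) = circ' A B := by
  ext i j
  simp only [prime, circ, circ', Matrix.sub_apply, Matrix.smul_apply]
  split_ifs with h
  · obtain ⟨rfl, rfl⟩ := h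
    simp
  · rfl

theorem single_commutator {b : M3} (hb : PreservesFlag b) (c : ℂ) :
    single 1 2 c * b - b * single 1 2 c = single 1 2 (c * (b 2 2 - b 1 1)) := by
  obtain ⟨hb₁, hb₂, hb₃⟩ := hb
  ext i j
  fin_cases i <;> fin_cases j <;> simp [mul_apply, Fin.sum_univ_three, *]
  ring

theorem prime_commutator_add_single {a b : M3} (ha : PreservesFlag a) (hb : PreservesFlag b)
    (α β : ℂ) :
    prime ((a + single 1 2 α) * (b + single 1 2 β) - (b + single 1 2 β) * (a + single 1 2 α)) =
      prime (a * b - b * a) := by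
  have hEE : ∀ x y : ℂ, single 1 2 x * single 1 2 y = (0 : M3) :=
    fun x y => single_mul_single_of_ne x 1 2 1 (by decide) y
  rw [show (a + single 1 2 α) * (b + single 1 2 β) - (b + single 1 2 β) * (a + single 1 2 α) =
      (a * b - b * a) + ((single 1 2 α * b - b * single 1 2 α) -
        (single 1 2 β * a - a * single 1 2 β)) by
    simp only [add_mul, mul_add, hEE]; abel]
  rw [single_commutator hb, single_commutator ha]
  simp only [prime_add, prime_sub, prime_single, sub_zero, add_zero]

theorem prime_commutator {a b : M3} (ha : PreservesFlag a) (hb : PreservesFlag b) :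
    prime (a * b - b * a) = prime (prime a * prime b - prime b * prime a) := by
  conv_lhs => rw [← prime_add_single a, ← prime_add_single b]
  exact prime_commutator_add_single ha.prime hb.prime _ _

theorem prime_mulVec {a : M3} {B : V3} (hB : B 2 = 0) : prime a *ᵥ B = a *ᵥ B := by
  ext i
  fin_cases i <;> simp [prime, mulVec, dotProduct, Fin.sum_univ_three, hB]

theorem vecMul_prime {a : M3} {A : V3} (hA : A 1 = 0) : A ᵥ* prime a = A ᵥ* a := by
  ext j
  fin_cases j <;> simp [prime, vecMul, dotProduct, Fin.sum_univ_three, hA]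

theorem prime_eq_self {m : M3} (h : m 1 2 = 0) : prime m = m := by
  simpa [h] using prime_add_single m

theorem prime_eq_zero_iff (m : M3) : prime m = 0 ↔ ∃ c : ℂ, m = c • single 1 2 1 := by
  constructor
  · intro h
    refine ⟨m 1 2, ?_⟩
    rw [smul_single, smul_eq_mul, mul_one]
    simpa [h] using (prime_add_single m).symm
  · rintro ⟨c, rfl⟩
    rw [smul_single, prime_single]

theorem trace_prime (m : M3) : (prime m).trace = m.trace := by
  simp [prime, trace_fin_three]

theorem inP_gbr {X Y : GC} (hX : inP X) (hY : inP Y) : inP (gbr X Y) := by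
  obtain ⟨-, ha₁, ha₂, ha₃, hA, hA'⟩ := hX
  obtain ⟨-, hb₁, hb₂, hb₃, hB, hB'⟩ := hY
  have ha : PreservesFlag X.1 := ⟨ha₁, ha₂, ha₃⟩
  have hb : PreservesFlag Y.1 := ⟨hb₁, hb₂, hb₃⟩
  obtain ⟨h₁, h₂, h₃⟩ := (((ha.mul hb).sub (hb.mul ha)).add (preservesFlag_circ hA hB')).sub
    (preservesFlag_circ hB hA')
  refine ⟨?_, h₁, h₂, h₃, ?_, ?_⟩
  · simp [gbr, trace_circ, trace_mul_comm X.1]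
  · simp [gbr, mulVec_apply_two_eq_zero ha hB, mulVec_apply_two_eq_zero hb hA,
      cross_apply_two_eq_zero hA' hB']
  · simp [gbr, vecMul_apply_one_eq_zero hb hA', vecMul_apply_one_eq_zero ha hB',
      cross_apply_one_eq_zero hA hB]

theorem ing_piP {X : GC} (hX : inP X) : ing (piP X) := by
  obtain ⟨htr, ha₁, ha₂, ha₃, hA, hA'⟩ := hX
  exact ⟨by simpa [piP, prime] using ha₁, by simp [piP, prime], by simpa [piP, prime] using ha₂,
    by simpa [piP, prime] using ha₃, by rwa [piP, trace_prime], hA, hA'⟩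

theorem piP_gbr {X Y : GC} (hX : inP X) (hY : inP Y) :
    piP (gbr X Y) = gbr' (piP X) (piP Y) := by
  obtain ⟨-, ha₁, ha₂, ha₃, hA, hA'⟩ := hX
  obtain ⟨-, hb₁, hb₂, hb₃, hB, hB'⟩ := hY
  simp only [piP, gbr, gbr', prime_add, prime_sub, prime_circ,
    prime_commutator ⟨ha₁, ha₂, ha₃⟩ ⟨hb₁, hb₂, hb₃⟩, prime_mulVec hA, prime_mulVec hB,
    vecMul_prime hA', vecMul_prime hB']

theorem inP_of_ing {Y : GC} (hY : ing Y) : inP Y :=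
  ⟨hY.2.2.2.2.1, hY.1, hY.2.2.1, hY.2.2.2.1, hY.2.2.2.2.2⟩

theorem piP_of_ing {Y : GC} (hY : ing Y) : piP Y = Y := by
  rw [piP, prime_eq_self hY.2.1]

theorem piP_eq_zero_iff (X : GC) :
    piP X = 0 ↔ ∃ c : ℂ, X = (c • single 1 2 (1 : ℂ), 0, 0) := by
  obtain ⟨a, A, A'⟩ := X
  simp only [piP, Prod.mk_eq_zero, Prod.mk.injEq, prime_eq_zero_iff]
  tauto

/-- P is closed under the bracket of G (hence a Lie subalgebra), and
π : P → g is a surjective Lie algebra homomorphism onto g with one-dimensional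
kernel spanned by (E₂₃, 0, 0). -/
theorem P_projects_onto_derS :
    (∀ X Y : GC, inP X → inP Y → inP (gbr X Y)) ∧
    (∀ X : GC, inP X → ing (piP X)) ∧
    (∀ X Y : GC, inP X → inP Y → piP (gbr X Y) = gbr' (piP X) (piP Y)) ∧
    (∀ Y : GC, ing Y → ∃ X : GC, inP X ∧ piP X = Y) ∧
    (∀ X : GC, inP X →
      (piP X = 0 ↔ ∃ c : ℂ, X = (c • Matrix.single 1 2 (1 : ℂ), 0, 0))) :=
  ⟨fun _ _ => inP_gbr, fun _ => ing_piP, fun _ _ => piP_gbr,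
    fun Y hY => ⟨Y, inP_of_ing hY, piP_of_ing hY⟩, fun X _ => piP_eq_zero_iff X⟩
end
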